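/- Let α > 0, β ∈ ℝ, let w be the normalized pure Fisher–Hartwig weight with parameters α, β, and let (φ_n) be a system of orthonormal polynomials for w. For each n ≥ 0 define L_n = ∫_0^{2π} [φ_n(ξ)·conj(φ_n(ξ))/(1−ξ)]·w(ξ) dθ, where ξ = e^{iθ}. Then L_n = (α + iβ)/(2α) for every n ≥ 0. -/

import Mathlib

open Complex Polynomial

noncomputable def uc (θ : ℝ) : ℂ := Complex.exp (θ * Complex.I)

noncomputable def starRev (p : Polynomial ℂ) : Polynomial ℂ :=
  (p.map (starRingEnd ℂ)).reverse

noncomputable def kC (φ : ℕ → Polynomial ℂ) (n : ℕ) : ℂ := (φ n).leadingCoeff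

noncomputable def rC (φ : ℕ → Polynomial ℂ) (n : ℕ) : ℂ := (φ n).coeff 0 / kC φ n

noncomputable def mC (φ : ℕ → Polynomial ℂ) (n : ℕ) : ℂ := kC φ n / kC φ (n+1)

noncomputable def sC (φ : ℕ → Polynomial ℂ) (n : ℕ) : ℂ := rC φ (n+1) / rC φ n

/-- A system of orthonormal polynomials on the unit circle for the weight `w`:
degree of `φ n` is `n`, leading coefficient real and positive, orthonormality. -/
def OPS (w : ℝ → ℂ) (φ : ℕ → Polynomial ℂ) : Prop :=
  (∀ n : ℕ, (φ n).degree = n) ∧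
  (∀ n : ℕ, ∃ c : ℝ, 0 < c ∧ (φ n).leadingCoeff = (c : ℂ)) ∧
  (∀ m n : ℕ, (∫ θ in (0:ℝ)..(2 * Real.pi),
      (φ m).eval (uc θ) * (starRingEnd ℂ) ((φ n).eval (uc θ)) * w θ)
    = if m = n then 1 else 0)

/-- Normalisation constant of the pure Fisher-Hartwig weight. -/
noncomputable def FHC (α β : ℝ) : ℂ :=
  Complex.Gamma (1 + (α : ℂ) + (β : ℂ) * Complex.I) *
    Complex.Gamma (1 + (α : ℂ) - (β : ℂ) * Complex.I) /
    (2 * (Real.pi : ℂ) * Complex.Gamma (1 + 2 * (α : ℂ)))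

/-- The normalized pure Fisher-Hartwig weight on the unit circle. -/
noncomputable def FHw (α β : ℝ) (θ : ℝ) : ℂ :=
  FHC α β * (((2 * Real.sin (θ / 2)) ^ (2 * α) : ℝ) : ℂ) *
    ((Real.exp (-β * (θ - Real.pi)) : ℝ) : ℂ)

/-!
On the circle `1 / (1 - e^{iθ}) = (1 + i cot (θ / 2)) / 2`, so `L_n` is `1 / 2` plus `i / 2` times
`∫ |φ_n|² cot (θ / 2) w`. The weight satisfies `w' = (α cot (θ / 2) - β) w` and vanishes at `0` and
`2π`, so integrating by parts turns `∫ |φ_n|² w'` into `-∫ (|φ_n|²)' w`. Writing `ξ = e^{iθ}`,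
`(|φ_n|²)' = 2 Re (i ξ φ_n'(ξ) conj φ_n(ξ))`, and since `ξ φ_n'` has degree `n` with leading
coefficient `n k_n`, orthogonality gives `∫ ξ φ_n' conj φ_n w = n`, which is real; hence
`∫ (|φ_n|²)' w = 0`, so `α ∫ |φ_n|² cot (θ / 2) w = β ∫ |φ_n|² w = β`.
-/

open MeasureTheory intervalIntegral ComplexConjugate

section LinearFunctional

variable {K M : Type*} [Field K] [AddCommGroup M] [Module K M] {φ : ℕ → K[X]}

theorem degree_sub_coeff_div_smul_lt {k : ℕ} (hφk : (φ k).degree = k) {p : K[X]}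
    (hp : p.degree ≤ k) : (p - (p.coeff k / (φ k).coeff k) • φ k).degree < k := by
  rw [degree_lt_iff_coeff_zero]
  intro m hm
  rcases hm.eq_or_lt with rfl | hkm
  · simp [div_mul_cancel₀ _ (coeff_ne_zero_of_eq_degree hφk)]
  · have hpm : p.coeff m = 0 := coeff_eq_zero_of_degree_lt (hp.trans_lt (by exact_mod_cast hkm))
    have hφm : (φ k).coeff m = 0 := coeff_eq_zero_of_degree_lt (by rw [hφk]; exact_mod_cast hkm)
    simp [hpm, hφm]

variable (hφ : ∀ k, (φ k).degree = k) (L : K[X] →ₗ[K] M)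
include hφ

theorem LinearMap.map_eq_zero_of_degree_lt {n : ℕ} (hL : ∀ k < n, L (φ k) = 0) {p : K[X]}
    (hp : p.degree < n) : L p = 0 := by
  induction n generalizing p with
  | zero =>
    rw [degree_eq_bot.mp (Nat.WithBot.lt_zero_iff.mp hp), map_zero]
  | succ n ih =>
    have hpn : p.degree ≤ n := Order.le_of_lt_succ (by exact_mod_cast hp)
    have hr := ih (fun k hk ↦ hL k (by omega)) (degree_sub_coeff_div_smul_lt (hφ n) hpn)
    rw [map_sub, map_smul, hL n n.lt_succ_self, smul_zero, sub_zero] at hr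
    exact hr

theorem LinearMap.map_eq_coeff_div_smul_of_degree_le {n : ℕ} (hL : ∀ k < n, L (φ k) = 0)
    {p : K[X]} (hp : p.degree ≤ n) : L p = (p.coeff n / (φ n).coeff n) • L (φ n) := by
  have hr := L.map_eq_zero_of_degree_lt hφ hL (degree_sub_coeff_div_smul_lt (hφ n) hp)
  rwa [map_sub, map_smul, sub_eq_zero] at hr

end LinearFunctional

theorem Polynomial.coeff_X_mul_derivative {R : Type*} [CommSemiring R] (p : R[X]) (m : ℕ) :
    (X * derivative p).coeff m = m * p.coeff m := by
  cases m with
  | zero => simp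
  | succ m => simp [coeff_X_mul, coeff_derivative, mul_comm]

theorem continuous_uc : Continuous uc := by
  unfold uc; fun_prop

noncomputable def circlePairing (p q : ℂ[X]) (θ : ℝ) : ℂ := p.eval (uc θ) * conj (q.eval (uc θ))

theorem continuous_circlePairing (p q : ℂ[X]) : Continuous (circlePairing p q) := by
  unfold circlePairing
  have := continuous_uc
  fun_prop

noncomputable def weightedInner (w : ℝ → ℂ) (p q : ℂ[X]) : ℂ :=
  ∫ θ in (0 : ℝ)..2 * Real.pi, circlePairing p q θ * w θ

noncomputable def weightedInnerLeft {w : ℝ → ℂ} (hw : IntervalIntegrable w volume 0 (2 * Real.pi))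
    (q : ℂ[X]) : ℂ[X] →ₗ[ℂ] ℂ where
  toFun p := weightedInner w p q
  map_add' p₁ p₂ := by
    have hint (p : ℂ[X]) := hw.continuousOn_mul (continuous_circlePairing p q).continuousOn
    simp only [weightedInner]
    rw [← integral_add (hint p₁) (hint p₂)]
    congr 1; funext θ; simp only [circlePairing, eval_add]; ring
  map_smul' c p := by
    simp only [weightedInner, RingHom.id_apply, smul_eq_mul]
    rw [← intervalIntegral.integral_const_mul]
    congr 1; funext θ; simp only [circlePairing, eval_smul, smul_eq_mul]; ring

theorem weightedInner_eq_coeff_div {w : ℝ → ℂ} (hw : IntervalIntegrable w volume 0 (2 * Real.pi))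
    {φ : ℕ → ℂ[X]} (hφ : OPS w φ) {n : ℕ} {p : ℂ[X]} (hp : p.degree ≤ n) :
    weightedInner w p (φ n) = p.coeff n / (φ n).coeff n := by
  have horth (k : ℕ) : weightedInner w (φ k) (φ n) = if k = n then 1 else 0 := hφ.2.2 k n
  have := (weightedInnerLeft hw (φ n)).map_eq_coeff_div_smul_of_degree_le hφ.1
    (fun k hk ↦ (horth k).trans (if_neg hk.ne)) hp
  simpa [weightedInnerLeft, horth] using this

theorem weightedInner_X_mul_derivative {w : ℝ → ℂ}
    (hw : IntervalIntegrable w volume 0 (2 * Real.pi)) {φ : ℕ → ℂ[X]} (hφ : OPS w φ) (n : ℕ) :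
    weightedInner w (X * derivative (φ n)) (φ n) = n := by
  have hdeg : (X * derivative (φ n)).degree ≤ (n : WithBot ℕ) := by
    refine degree_le_iff_coeff_zero _ _ |>.mpr fun m hm ↦ ?_
    rw [coeff_X_mul_derivative, coeff_eq_zero_of_degree_lt (by rwa [hφ.1 n]), mul_zero]
  rw [weightedInner_eq_coeff_div hw hφ hdeg, coeff_X_mul_derivative,
    mul_div_cancel_right₀ _ (coeff_ne_zero_of_eq_degree (hφ.1 n))]

theorem hasDerivAt_eval_uc (p : ℂ[X]) (θ : ℝ) :
    HasDerivAt (fun t ↦ p.eval (uc t)) (I * (X * derivative p).eval (uc θ)) θ := by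
  have hexp : HasDerivAt (fun z : ℂ ↦ exp (z * I)) (exp (θ * I) * I) θ := by
    simpa only [id, one_mul] using ((hasDerivAt_id (θ : ℂ)).mul_const I).cexp
  refine ((p.hasDerivAt (exp (θ * I))).comp (θ : ℂ) hexp).comp_ofReal.congr_deriv ?_
  simp only [uc, eval_mul, eval_X]
  ring

theorem hasDerivAt_circlePairing_self (p : ℂ[X]) (θ : ℝ) :
    HasDerivAt (circlePairing p p)
      (I * (circlePairing (X * derivative p) p θ - conj (circlePairing (X * derivative p) p θ)))
      θ := by
  have hp := hasDerivAt_eval_uc p θ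
  refine (hp.mul hp.star).congr_deriv ?_
  simp only [circlePairing, star_def, map_mul, conj_I, conj_conj]
  ring

theorem integral_deriv_circlePairing_self_mul_eq_zero {w : ℝ → ℂ}
    (hw : IntervalIntegrable w volume 0 (2 * Real.pi)) (hw_real : ∀ θ, conj (w θ) = w θ)
    {φ : ℕ → ℂ[X]} (hφ : OPS w φ) (n : ℕ) :
    ∫ θ in (0 : ℝ)..2 * Real.pi, I * (circlePairing (X * derivative (φ n)) (φ n) θ
      - conj (circlePairing (X * derivative (φ n)) (φ n) θ)) * w θ = 0 := by
  set A := circlePairing (X * derivative (φ n)) (φ n)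
  have hA : IntervalIntegrable (fun θ ↦ A θ * w θ) volume 0 (2 * Real.pi) :=
    hw.continuousOn_mul (continuous_circlePairing _ _).continuousOn
  have hA_conj : IntervalIntegrable (fun θ ↦ conj (A θ) * w θ) volume 0 (2 * Real.pi) :=
    hw.continuousOn_mul (continuous_conj.comp (continuous_circlePairing _ _)).continuousOn
  have hJ : ∫ θ in (0 : ℝ)..2 * Real.pi, A θ * w θ = n := weightedInner_X_mul_derivative hw hφ n
  have hJ_conj : ∫ θ in (0 : ℝ)..2 * Real.pi, conj (A θ) * w θ = n := by
    calc ∫ θ in (0 : ℝ)..2 * Real.pi, conj (A θ) * w θ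
        = ∫ θ in (0 : ℝ)..2 * Real.pi, conj (A θ * w θ) :=
          integral_congr fun θ _ ↦ by rw [map_mul, hw_real]
      _ = n := by rw [intervalIntegral_conj, hJ, conj_natCast]
  calc ∫ θ in (0 : ℝ)..2 * Real.pi, I * (A θ - conj (A θ)) * w θ
      = I * ((∫ θ in (0 : ℝ)..2 * Real.pi, A θ * w θ)
          - ∫ θ in (0 : ℝ)..2 * Real.pi, conj (A θ) * w θ) := by
        rw [← integral_sub hA hA_conj, ← intervalIntegral.integral_const_mul]
        exact integral_congr fun θ _ ↦ by ring
    _ = 0 := by rw [hJ, hJ_conj, sub_self, mul_zero]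

theorem Complex.inv_one_sub_exp_two_mul_mul_I {z : ℂ} (hz : sin z ≠ 0) :
    (1 - exp (2 * z * I))⁻¹ = (1 + I * cot z) / 2 := by
  have h : 1 - exp (2 * z * I) = 2 * sin z * (sin z - cos z * I) := by
    rw [exp_mul_I, cos_two_mul, sin_two_mul]
    linear_combination (-2) * cos_sq_add_sin_sq z
  rw [h, cot_eq_cos_div_sin]
  apply inv_eq_of_mul_eq_one_right
  field_simp
  linear_combination cos_sq_add_sin_sq z - cos z ^ 2 * I_sq

theorem inv_one_sub_uc {θ : ℝ} (hθ : Real.sin (θ / 2) ≠ 0) :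
    (1 - uc θ)⁻¹ = (1 + I * Real.cot (θ / 2)) / 2 := by
  have hsin : sin ((θ / 2 : ℝ) : ℂ) ≠ 0 := by rw [← ofReal_sin]; exact_mod_cast hθ
  rw [ofReal_cot, ← Complex.inv_one_sub_exp_two_mul_mul_I hsin, uc]
  push_cast
  ring_nf

theorem continuous_two_sin_half_rpow {a : ℝ} (ha : 0 ≤ a) :
    Continuous fun θ : ℝ ↦ (2 * Real.sin (θ / 2)) ^ (2 * a) :=
  (continuous_const.mul (Real.continuous_sin.comp (continuous_id.div_const 2))).rpow_const
    fun _ ↦ Or.inr (by positivity)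

theorem hasDerivAt_two_sin_half_rpow (a : ℝ) {θ : ℝ} (hθ : Real.sin (θ / 2) ≠ 0) :
    HasDerivAt (fun t ↦ (2 * Real.sin (t / 2)) ^ (2 * a))
      (a * Real.cot (θ / 2) * (2 * Real.sin (θ / 2)) ^ (2 * a)) θ := by
  have hbase : HasDerivAt (fun t ↦ 2 * Real.sin (t / 2)) (Real.cos (θ / 2)) θ := by
    refine (((Real.hasDerivAt_sin _).comp θ ((hasDerivAt_id θ).div_const 2)).const_mul
      2).congr_deriv ?_
    simp only [id]; ring
  have h2 : 2 * Real.sin (θ / 2) ≠ 0 := mul_ne_zero two_ne_zero hθ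
  refine (hbase.rpow_const (Or.inl h2)).congr_deriv ?_
  rw [Real.rpow_sub_one h2, Real.cot_eq_cos_div_sin]
  field_simp

theorem intervalIntegrable_cot_mul_two_sin_half_rpow {a : ℝ} (ha : 0 < a) :
    IntervalIntegrable (fun θ ↦ Real.cot (θ / 2) * (2 * Real.sin (θ / 2)) ^ (2 * a))
      volume 0 (2 * Real.pi) := by
  set f := fun θ : ℝ ↦ (2 * Real.sin (θ / 2)) ^ (2 * a)
  have hf : Continuous f := continuous_two_sin_half_rpow ha.le
  have hπ := Real.pi_pos
  have hsin {θ : ℝ} (h0 : 0 < θ) (h2π : θ < 2 * Real.pi) : 0 < Real.sin (θ / 2) :=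
    Real.sin_pos_of_pos_of_lt_pi (by linarith) (by linarith)
  -- `f' = a cot (θ / 2) f` has constant sign on `(0, π)` and on `(π, 2π)`
  have hleft : IntegrableOn (fun θ ↦ a * Real.cot (θ / 2) * f θ) (Set.Ioc 0 Real.pi) := by
    refine integrableOn_deriv_of_nonneg hf.continuousOn
      (fun θ hθ ↦ hasDerivAt_two_sin_half_rpow a (hsin hθ.1 (by linarith [hθ.2])).ne')
      fun θ hθ ↦ ?_
    have hcos := Real.cos_nonneg_of_mem_Icc (x := θ / 2) ⟨by linarith [hθ.1], by linarith [hθ.2]⟩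
    have hs := hsin hθ.1 (by linarith [hθ.2])
    rw [Real.cot_eq_cos_div_sin]
    positivity
  have hright : IntegrableOn (fun θ ↦ -(a * Real.cot (θ / 2) * f θ))
      (Set.Ioc Real.pi (2 * Real.pi)) := by
    refine integrableOn_deriv_of_nonneg hf.neg.continuousOn
      (fun θ hθ ↦ (hasDerivAt_two_sin_half_rpow a (hsin (by linarith [hθ.1]) hθ.2).ne').neg)
      fun θ hθ ↦ ?_
    have hcos := Real.cos_nonpos_of_pi_div_two_le_of_le (x := θ / 2) (by linarith [hθ.1])
      (by linarith [hθ.2])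
    have hs := hsin (by linarith [hθ.1]) hθ.2
    have hfθ : 0 ≤ f θ := Real.rpow_nonneg (by positivity) _
    rw [neg_nonneg, Real.cot_eq_cos_div_sin]
    exact mul_nonpos_of_nonpos_of_nonneg
      (mul_nonpos_of_nonneg_of_nonpos ha.le (div_nonpos_of_nonpos_of_nonneg hcos hs.le)) hfθ
  have hright' : IntegrableOn (fun θ ↦ a * Real.cot (θ / 2) * f θ)
      (Set.Ioc Real.pi (2 * Real.pi)) := by simpa using hright.neg
  have hall := ((intervalIntegrable_iff_integrableOn_Ioc_of_le hπ.le).2 hleft).trans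
    ((intervalIntegrable_iff_integrableOn_Ioc_of_le (by linarith)).2 hright')
  convert hall.const_mul a⁻¹ using 1
  funext θ
  simp only [f]
  field_simp

theorem conj_FHC (α β : ℝ) : conj (FHC α β) = FHC α β := by
  have h₁ : conj (1 + (α : ℂ) + β * I) = 1 + α - β * I := by simp [conj_ofReal]; ring
  have h₂ : conj (1 + (α : ℂ) - β * I) = 1 + α + β * I := by simp [conj_ofReal]
  have h₃ : conj (1 + 2 * (α : ℂ)) = 1 + 2 * α := by simp [conj_ofReal, map_ofNat]
  rw [FHC, map_div₀, map_mul, map_mul, map_mul, ← Gamma_conj, ← Gamma_conj,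
    ← Gamma_conj, h₁, h₂, h₃, map_ofNat, conj_ofReal, mul_comm (Gamma _)]

theorem conj_FHw (α β θ : ℝ) : conj (FHw α β θ) = FHw α β θ := by
  simp only [FHw, map_mul, conj_FHC, conj_ofReal]

theorem continuous_FHw {α : ℝ} (hα : 0 ≤ α) (β : ℝ) : Continuous (FHw α β) := by
  have := continuous_two_sin_half_rpow hα
  unfold FHw
  fun_prop

theorem FHw_zero {α : ℝ} (hα : 0 < α) (β : ℝ) : FHw α β 0 = 0 := by
  simp [FHw, Real.zero_rpow (by positivity : 2 * α ≠ 0)]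

theorem FHw_two_pi {α : ℝ} (hα : 0 < α) (β : ℝ) : FHw α β (2 * Real.pi) = 0 := by
  simp [FHw, Real.zero_rpow (by positivity : 2 * α ≠ 0)]

theorem hasDerivAt_FHw (α β : ℝ) {θ : ℝ} (hθ : Real.sin (θ / 2) ≠ 0) :
    HasDerivAt (FHw α β) ((α * Real.cot (θ / 2) - β : ℝ) * FHw α β θ) θ := by
  have hexp : HasDerivAt (fun t ↦ Real.exp (-β * (t - Real.pi)))
      (Real.exp (-β * (θ - Real.pi)) * -β) θ := by
    simpa using (((hasDerivAt_id θ).sub_const Real.pi).const_mul (-β)).exp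
  refine (((hasDerivAt_two_sin_half_rpow α hθ).ofReal_comp.const_mul (FHC α β)).mul
    hexp.ofReal_comp).congr_deriv ?_
  simp only [FHw]
  push_cast
  ring

theorem intervalIntegrable_cot_mul_FHw {α : ℝ} (hα : 0 < α) (β : ℝ) :
    IntervalIntegrable (fun θ ↦ (Real.cot (θ / 2) : ℂ) * FHw α β θ) volume 0 (2 * Real.pi) := by
  have h := intervalIntegrable_cot_mul_two_sin_half_rpow hα
  have hC : IntervalIntegrable
      (fun θ ↦ ((Real.cot (θ / 2) * (2 * Real.sin (θ / 2)) ^ (2 * α) : ℝ) : ℂ))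
      volume 0 (2 * Real.pi) := ⟨h.1.ofReal, h.2.ofReal⟩
  convert (hC.mul_continuousOn (g := fun θ ↦ ((Real.exp (-β * (θ - Real.pi)) : ℝ) : ℂ))
    (by fun_prop)).const_mul (FHC α β) using 1
  funext θ
  simp only [FHw]
  push_cast
  ring

theorem inv_one_sub_uc_mul_FHw {α : ℝ} (hα : 0 < α) (β : ℝ) {θ : ℝ}
    (hθ : θ ∈ Set.Icc 0 (2 * Real.pi)) :
    (1 - uc θ)⁻¹ * FHw α β θ = (1 + I * Real.cot (θ / 2)) / 2 * FHw α β θ := by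
  rcases hθ.1.eq_or_lt with rfl | h0
  · simp [FHw_zero hα]
  rcases hθ.2.eq_or_lt with rfl | h2π
  · simp [FHw_two_pi hα]
  rw [inv_one_sub_uc (Real.sin_pos_of_pos_of_lt_pi (by linarith) (by linarith)).ne']

theorem integral_circlePairing_self_mul_cot_mul_FHw {α : ℝ} (hα : 0 < α) {β : ℝ}
    {φ : ℕ → ℂ[X]} (hφ : OPS (FHw α β) φ) (n : ℕ) :
    ∫ θ in (0 : ℝ)..2 * Real.pi, circlePairing (φ n) (φ n) θ * (Real.cot (θ / 2) * FHw α β θ)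
      = β / α := by
  set P := circlePairing (φ n) (φ n)
  have hP := continuous_circlePairing (φ n) (φ n)
  have hA := continuous_circlePairing (X * derivative (φ n)) (φ n)
  have hw := continuous_FHw hα.le β
  have hw_int : IntervalIntegrable (FHw α β) volume 0 (2 * Real.pi) := hw.intervalIntegrable _ _
  have hcot := intervalIntegrable_cot_mul_FHw hα β
  have hw' : IntervalIntegrable (fun θ ↦ ((α * Real.cot (θ / 2) - β : ℝ) : ℂ) * FHw α β θ)
      volume 0 (2 * Real.pi) := by
    simpa only [ofReal_sub, ofReal_mul, sub_mul, mul_assoc]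
      using (hcot.const_mul α).sub (hw_int.const_mul β)
  have hsin : ∀ θ ∈ Set.Ioo (min 0 (2 * Real.pi)) (max 0 (2 * Real.pi)),
      Real.sin (θ / 2) ≠ 0 := by
    rw [min_eq_left Real.two_pi_pos.le, max_eq_right Real.two_pi_pos.le]
    exact fun θ hθ ↦ (Real.sin_pos_of_pos_of_lt_pi (by linarith [hθ.1])
      (by linarith [hθ.2])).ne'
  -- integration by parts against `w' = (α cot (θ / 2) - β) w`, with `w` vanishing at both ends
  have hibp := integral_mul_deriv_eq_deriv_mul_of_hasDerivAt hP.continuousOn hw.continuousOn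
    (fun θ _ ↦ hasDerivAt_circlePairing_self (φ n) θ)
    (fun θ hθ ↦ hasDerivAt_FHw α β (hsin θ hθ)) (Continuous.intervalIntegrable (by fun_prop) _ _)
    hw'
  rw [FHw_zero hα, FHw_two_pi hα, integral_deriv_circlePairing_self_mul_eq_zero hw_int
    (conj_FHw α β) hφ n, mul_zero, mul_zero, sub_zero, sub_zero] at hibp
  have hPw : ∫ θ in (0 : ℝ)..2 * Real.pi, P θ * FHw α β θ = 1 := (hφ.2.2 n n).trans (if_pos rfl)
  have hsplit :
      ∫ θ in (0 : ℝ)..2 * Real.pi, P θ * (((α * Real.cot (θ / 2) - β : ℝ) : ℂ) * FHw α β θ)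
      = α * (∫ θ in (0 : ℝ)..2 * Real.pi, P θ * (Real.cot (θ / 2) * FHw α β θ))
        - β * ∫ θ in (0 : ℝ)..2 * Real.pi, P θ * FHw α β θ := by
    rw [← intervalIntegral.integral_const_mul, ← intervalIntegral.integral_const_mul,
      ← integral_sub ((hcot.continuousOn_mul hP.continuousOn).const_mul _)
        ((hw_int.continuousOn_mul hP.continuousOn).const_mul _)]
    exact integral_congr fun θ _ ↦ by push_cast; ring
  rw [hsplit, hPw] at hibp
  have hα' : (α : ℂ) ≠ 0 := by exact_mod_cast hα.ne'
  rw [eq_div_iff hα']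
  linear_combination hibp

theorem FH_Ln (α β : ℝ) (hα : 0 < α)
    (φ : ℕ → Polynomial ℂ) (hφ : OPS (FHw α β) φ) (n : ℕ) :
    (∫ θ in (0:ℝ)..(2 * Real.pi),
        ((φ n).eval (uc θ) * (starRingEnd ℂ) ((φ n).eval (uc θ)) / (1 - uc θ))
          * FHw α β θ)
      = ((α : ℂ) + (β : ℂ) * Complex.I) / (2 * (α : ℂ)) := by
  set P := circlePairing (φ n) (φ n)
  have hP := continuous_circlePairing (φ n) (φ n)
  have hw_int : IntervalIntegrable (FHw α β) volume 0 (2 * Real.pi) :=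
    (continuous_FHw hα.le β).intervalIntegrable _ _
  have hPw : ∫ θ in (0 : ℝ)..2 * Real.pi, P θ * FHw α β θ = 1 := (hφ.2.2 n n).trans (if_pos rfl)
  have hα' : (α : ℂ) ≠ 0 := by exact_mod_cast hα.ne'
  calc ∫ θ in (0 : ℝ)..2 * Real.pi, P θ / (1 - uc θ) * FHw α β θ
      = ∫ θ in (0 : ℝ)..2 * Real.pi,
          1 / 2 * (P θ * FHw α β θ) + I / 2 * (P θ * (Real.cot (θ / 2) * FHw α β θ)) := by
        refine integral_congr fun θ hθ ↦ ?_
        rw [div_eq_mul_inv, mul_assoc, inv_one_sub_uc_mul_FHw hα β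
          (by rwa [Set.uIcc_of_le Real.two_pi_pos.le] at hθ)]
        ring
    _ = 1 / 2 * 1 + I / 2 * (β / α) := by
        rw [integral_add ((hw_int.continuousOn_mul hP.continuousOn).const_mul _)
          (((intervalIntegrable_cot_mul_FHw hα β).continuousOn_mul hP.continuousOn).const_mul _),
          intervalIntegral.integral_const_mul, intervalIntegral.integral_const_mul, hPw,
          integral_circlePairing_self_mul_cot_mul_FHw hα hφ n]
    _ = (α + β * I) / (2 * α) := by
        field_simp
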